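/- arXiv:1802.08832 — 6 statements merged into one kernel-verified Lean document; each statement's English description precedes it below -/
import Mathlib

section
/- Let A and B be linear endomorphisms of finite-dimensional vector spaces V and W, respectively, over a field F. Then the minimal polynomials of A and B are coprime if and only if every subspace Y of the direct sum V × W that is invariant under the endomorphism A ⊕ B (acting coordinatewise) is of the form Y₁ × Y₂ where Y₁ is an A-invariant subspace of V and Y₂ is a B-invariant subspace of W. -/
open Polynomial LinearMap

section Aux

variable {F V W : Type*} [Field F]
  [AddCommGroup V] [Module F V]
  [AddCommGroup W] [Module F W]

private lemma aeval_prodMap' (A : Module.End F V) (B : Module.End F W) (f : F[X]) :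
    aeval (A.prodMap B) f = (aeval A f).prodMap (aeval B f) := by
  have h : A.prodMap B = LinearMap.prodMapAlgHom F V W (A, B) := rfl
  rw [h, Polynomial.aeval_algHom_apply]
  have h1 : (aeval ((A, B) : Module.End F V × Module.End F W) f)
      = (aeval A f, aeval B f) := by
    refine Prod.ext ?_ ?_
    · exact (Polynomial.aeval_algHom_apply (AlgHom.fst F _ _) (A, B) f).symm
    · exact (Polynomial.aeval_algHom_apply (AlgHom.snd F _ _) (A, B) f).symm
  rw [h1]; rfl

private lemma aeval_mem' {M : Type*} [AddCommGroup M] [Module F M] (T : Module.End F M)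
    (Y : Submodule F M) (hY : ∀ x ∈ Y, T x ∈ Y) (f : F[X]) {x : M} (hx : x ∈ Y) :
    aeval T f x ∈ Y := by
  have key : ∀ n : ℕ, ∀ y ∈ Y, (T ^ n) y ∈ Y := by
    intro n
    induction n with
    | zero => intro y hy; simpa using hy
    | succ n ih =>
      intro y hy
      rw [pow_succ, Module.End.mul_apply]
      exact ih _ (hY y hy)
  induction f using Polynomial.induction_on' with
  | add p q hp hq =>
    rw [map_add, LinearMap.add_apply]
    exact Y.add_mem hp hq
  | monomial n a =>
    rw [aeval_monomial, Module.End.mul_apply, Module.algebraMap_end_apply]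
    exact Y.smul_mem a (key n x hx)

private lemma exists_ker_ne' [FiniteDimensional F V] (A : Module.End F V) {r : F[X]}
    (hr : Irreducible r) (hdvd : r ∣ minpoly F A) :
    ∃ v : V, v ≠ 0 ∧ aeval A r v = 0 := by
  by_contra h
  push_neg at h
  have hker : ∀ x : V, aeval A r x = 0 → x = 0 := by
    intro x hx
    by_contra hx0
    exact h x hx0 hx
  obtain ⟨s, hs⟩ := hdvd
  have hps : aeval A (minpoly F A) = 0 := minpoly.aeval F A
  have hs0 : aeval A s = 0 := by
    apply LinearMap.ext
    intro x
    have : aeval A r (aeval A s x) = 0 := by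
      rw [← Module.End.mul_apply, ← map_mul, ← hs, hps]
      rfl
    simpa using hker _ this
  have hp0 : minpoly F A ≠ 0 := minpoly.ne_zero (Algebra.IsIntegral.isIntegral (R := F) A)
  have hdvd2 : minpoly F A ∣ s := minpoly.dvd F A hs0
  have hs_ne : s ≠ 0 := by
    intro h0
    exact hp0 (by rw [hs, h0, mul_zero])
  have hr0 : r ≠ 0 := hr.ne_zero
  have hdeg := Polynomial.natDegree_le_of_dvd hdvd2 hs_ne
  have hmul : (minpoly F A).natDegree = r.natDegree + s.natDegree := by
    rw [hs, Polynomial.natDegree_mul hr0 hs_ne]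
  have hrpos : 0 < r.natDegree := hr.natDegree_pos
  omega

end Aux

/-- The minimal polynomials of `A` and `B` are coprime iff every subspace of
`V × W` invariant under `A ⊕ B` is a product of an `A`-invariant subspace and a
`B`-invariant subspace. -/
theorem minpoly_coprime_iff_invariant_prod
    {F V W : Type*} [Field F]
    [AddCommGroup V] [Module F V] [FiniteDimensional F V]
    [AddCommGroup W] [Module F W] [FiniteDimensional F W]
    (A : Module.End F V) (B : Module.End F W) :
    IsCoprime (minpoly F A) (minpoly F B) ↔
      ∀ Y : Submodule F (V × W), (∀ x ∈ Y, (A.prodMap B) x ∈ Y) →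
        ∃ (Y₁ : Submodule F V) (Y₂ : Submodule F W),
          (∀ x ∈ Y₁, A x ∈ Y₁) ∧ (∀ x ∈ Y₂, B x ∈ Y₂) ∧ Y = Y₁.prod Y₂ := by
  constructor
  · rintro ⟨u, v, huv⟩ Y hY
    refine ⟨Y.comap (LinearMap.inl F V W), Y.comap (LinearMap.inr F V W), ?_, ?_, ?_⟩
    · intro x hx
      have hmem : ((x, 0) : V × W) ∈ Y := hx
      have := hY (x, 0) hmem
      simpa using this
    · intro x hx
      have hmem : ((0, x) : V × W) ∈ Y := hx
      have := hY (0, x) hmem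
      simpa using this
    · have hp : aeval A (minpoly F A) = 0 := minpoly.aeval F A
      have hq : aeval B (minpoly F B) = 0 := minpoly.aeval F B
      have e1 : aeval A (v * minpoly F B) = 1 := by
        have hv : v * minpoly F B = 1 - u * minpoly F A := by
          rw [← huv]; ring
        rw [hv, map_sub, map_one, map_mul, hp, mul_zero, sub_zero]
      have e2 : aeval B (v * minpoly F B) = 0 := by
        rw [map_mul, hq, mul_zero]
      ext ⟨x, y⟩
      simp only [Submodule.mem_prod, Submodule.mem_comap]
      constructor
      · intro hxy
        have h1 : ((x, 0) : V × W) ∈ Y := by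
          have hm := aeval_mem' (A.prodMap B) Y hY (v * minpoly F B) hxy
          rw [aeval_prodMap', e1, e2] at hm
          simpa using hm
        have h2 : ((0, y) : V × W) ∈ Y := by
          have := Y.sub_mem hxy h1
          simpa using this
        exact ⟨h1, h2⟩
      · rintro ⟨h1, h2⟩
        have := Y.add_mem h1 h2
        simpa using this
  · intro hinv
    by_contra hncop
    have hp0 : minpoly F A ≠ 0 := minpoly.ne_zero (Algebra.IsIntegral.isIntegral (R := F) A)
    have H : ¬ ∀ z ∈ nonunits F[X], z ≠ 0 → z ∣ minpoly F A → ¬ z ∣ minpoly F B := by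
      intro H
      exact hncop (isCoprime_of_dvd _ _ (fun h => hp0 h.1) H)
    push_neg at H
    obtain ⟨z, hznu, hz0, hzp, hzq⟩ := H
    obtain ⟨r, hr_irr, hrz⟩ := WfDvdMonoid.exists_irreducible_factor hznu hz0
    obtain ⟨v, hv0, hvr⟩ := exists_ker_ne' A hr_irr (hrz.trans hzp)
    obtain ⟨w, hw0, hwr⟩ := exists_ker_ne' B hr_irr (hrz.trans hzq)
    set T := A.prodMap B with hT
    let φ : F[X] →ₗ[F] V × W :=
      { toFun := fun f => aeval T f (v, w)
        map_add' := fun f g => by simp [map_add]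
        map_smul' := fun c f => by simp [map_smul] }
    have hYinv : ∀ x ∈ LinearMap.range φ, T x ∈ LinearMap.range φ := by
      rintro _ ⟨f, rfl⟩
      refine ⟨X * f, ?_⟩
      show aeval T (X * f) (v, w) = T (aeval T f (v, w))
      rw [map_mul, aeval_X, Module.End.mul_apply]
    obtain ⟨Y₁, Y₂, h1, h2, hprod⟩ := hinv (LinearMap.range φ) hYinv
    have hvw : (v, w) ∈ LinearMap.range φ := ⟨1, by simp [φ]⟩
    rw [hprod] at hvw
    have hv1 : v ∈ Y₁ := hvw.1
    have hw2 : w ∈ Y₂ := hvw.2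
    have hv0mem : ((v, 0) : V × W) ∈ LinearMap.range φ := by
      rw [hprod]
      exact ⟨hv1, Y₂.zero_mem⟩
    obtain ⟨f, hf⟩ := hv0mem
    have hf' : ((aeval A f) v, (aeval B f) w) = (v, 0) := by
      have : aeval T f (v, w) = (v, 0) := hf
      rwa [hT, aeval_prodMap'] at this
    have hfv : aeval A f v = v := congrArg Prod.fst hf'
    have hfw : aeval B f w = 0 := congrArg Prod.snd hf'
    have hrf : r ∣ f := by
      by_contra hnd
      obtain ⟨a, b, hab⟩ := hr_irr.coprime_iff_not_dvd.mpr hnd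
      have : w = 0 := by
        have := congrArg (fun g => aeval B g w) hab
        simpa [map_add, map_mul, Module.End.mul_apply, hwr, hfw] using this.symm
      exact hw0 this
    obtain ⟨g, hg⟩ := hrf
    have : aeval A f v = 0 := by
      rw [hg, mul_comm, map_mul, Module.End.mul_apply, hvr, map_zero]
    rw [hfv] at this
    exact hv0 this
end

section
/- Let A be a linear endomorphism of a finite-dimensional vector space V over a field F whose minimal polynomial factors as m_A = p₁^{k₁} ⋯ p_r^{k_r} with p₁, …, p_r pairwise distinct irreducible polynomials, and set V_i = ker(p_i(A)^{k_i}), with restriction A_i = A|V_i. Then a subspace Y of V is hyperinvariant for A if and only if Y = (Y ∩ V₁) ⊕ ⋯ ⊕ (Y ∩ V_r) and, for each i, the subspace Y ∩ V_i of V_i is hyperinvariant for A_i. -/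
/-- A subspace `Y` is hyperinvariant for `A` if `B Y ⊆ Y` for every endomorphism `B`
commuting with `A`. -/
def HyperinvariantSubspace {F V : Type*} [Field F] [AddCommGroup V] [Module F V]
    (A : Module.End F V) (Y : Submodule F V) : Prop :=
  ∀ B : Module.End F V, Commute B A → ∀ x ∈ Y, B x ∈ Y

/-- The kernel of `q(A) ^ m` is invariant under `A`. -/
theorem aeval_pow_ker_invariant {F V : Type*} [Field F] [AddCommGroup V] [Module F V]
    (A : Module.End F V) (q : Polynomial F) (m : ℕ) :
    ∀ x ∈ LinearMap.ker (Polynomial.aeval A q ^ m),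
      A x ∈ LinearMap.ker (Polynomial.aeval A q ^ m) := by
  intro x hx
  rw [LinearMap.mem_ker] at hx ⊢
  have hc : Commute A (Polynomial.aeval A q) := by
    have h := (Commute.all Polynomial.X q).map (Polynomial.aeval A).toRingHom
    simpa using h
  have hc' := (hc.pow_right m).symm
  calc (Polynomial.aeval A q ^ m) (A x) = ((Polynomial.aeval A q ^ m) * A) x := rfl
    _ = (A * (Polynomial.aeval A q ^ m)) x := by rw [hc']
    _ = A ((Polynomial.aeval A q ^ m) x) := rfl
    _ = 0 := by rw [hx]; simp

/-!
The Chinese remainder theorem yields polynomials `eᵢ` such that `eᵢ(A)` is the projection of `V`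
onto `Vᵢ` along the other primary components. An endomorphism commuting with `A` commutes with
every `eᵢ(A)`, so a hyperinvariant `Y` is the sum of the `eᵢ(A) Y ⊆ Y ∩ Vᵢ`; and an endomorphism
of `Vᵢ` commuting with `Aᵢ` extends, through `eᵢ(A)`, to one of `V` commuting with `A`.
Conversely, each `Vᵢ` is hyperinvariant, so an endomorphism commuting with `A` restricts to one
commuting with `Aᵢ`, and sums of hyperinvariant subspaces are hyperinvariant.
-/

open Function Polynomial

section PrimaryDecomposition

variable {R M : Type*} [CommRing R] [AddCommGroup M] [Module R M] (A : Module.End R M)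

theorem commute_aeval_of_commute {B : Module.End R M} (h : Commute B A) (q : R[X]) :
    Commute B (aeval A q) :=
  Algebra.commute_of_mem_adjoin_singleton_of_commute (aeval_mem_adjoin_singleton R A) h

theorem ker_aeval_le_ker_aeval_of_dvd {a b : R[X]} (h : a ∣ b) :
    LinearMap.ker (aeval A a) ≤ LinearMap.ker (aeval A b) := by
  obtain ⟨c, rfl⟩ := h
  rw [mul_comm, map_mul]
  exact LinearMap.ker_le_ker_comp _ _

variable {ι : Type*} [Fintype ι] {P : ι → R[X]}

theorem iSupIndep_ker_aeval_of_pairwise_isCoprime (hP : Pairwise (IsCoprime on P)) :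
    iSupIndep fun i => LinearMap.ker (aeval A (P i)) := by
  classical
  intro i
  have hcop : IsCoprime (P i) (∏ j ∈ Finset.univ.erase i, P j) :=
    IsCoprime.prod_right fun j hj => hP (Finset.ne_of_mem_erase hj).symm
  refine (disjoint_ker_aeval_of_isCoprime A hcop).mono_right (iSup₂_le fun j hj => ?_)
  exact ker_aeval_le_ker_aeval_of_dvd A
    (Finset.dvd_prod_of_mem P (Finset.mem_erase.2 ⟨hj, Finset.mem_univ j⟩))

theorem exists_aeval_projections [DecidableEq ι] (hP : Pairwise (IsCoprime on P))
    (hA : aeval A (∏ i, P i) = 0) :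
    ∃ e : ι → R[X], ∑ i, aeval A (e i) = 1 ∧
      (∀ i x, aeval A (e i) x ∈ LinearMap.ker (aeval A (P i))) ∧
      ∀ i, ∀ x ∈ LinearMap.ker (aeval A (P i)), aeval A (e i) x = x := by
  rcases isEmpty_or_nonempty ι with hι | hι
  · refine ⟨0, ?_, isEmptyElim, isEmptyElim⟩
    simpa [eq_comm] using hA
  obtain ⟨μ, hμ⟩ := (exists_sum_eq_one_iff_pairwise_coprime' (s := P)).2 hP
  set e : ι → R[X] := fun i => μ i * ∏ j ∈ {i}ᶜ, P j
  have hsum : ∑ i, aeval A (e i) = 1 := by rw [← map_sum, hμ, map_one]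
  have hPe : ∀ i, P i * e i = μ i * ∏ j, P j := fun i => by
    rw [← Finset.prod_mul_prod_compl {i} P, Finset.prod_singleton]
    ring
  have hdvd : ∀ i j, i ≠ j → P i ∣ e j := fun i j hij =>
    dvd_mul_of_dvd_right (Finset.dvd_prod_of_mem P (by simpa using hij)) _
  refine ⟨e, hsum, fun i x => ?_, fun i x hx => ?_⟩
  · rw [LinearMap.mem_ker, ← Module.End.mul_apply, ← map_mul, hPe, map_mul, hA, mul_zero,
      LinearMap.zero_apply]
  · calc aeval A (e i) x = ∑ j, aeval A (e j) x :=
          (Finset.sum_eq_single i (fun j _ hji =>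
            ker_aeval_le_ker_aeval_of_dvd A (hdvd i j hji.symm) hx) (by simp)).symm
      _ = x := by rw [← LinearMap.sum_apply, hsum, Module.End.one_apply]

end PrimaryDecomposition

theorem pairwise_isCoprime_pow_of_injective {F ι : Type*} [Field F] {p : ι → F[X]}
    (hirr : ∀ i, Irreducible (p i)) (hmonic : ∀ i, (p i).Monic) (hdist : Function.Injective p)
    (k : ι → ℕ) : Pairwise (IsCoprime on fun i => p i ^ k i) := by
  intro i j hij
  refine IsCoprime.pow ((hirr i).coprime_iff_not_dvd.2 fun hdvd => hij (hdist ?_))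
  exact eq_of_monic_of_associated (hmonic i) (hmonic j) ((hirr i).associated_of_dvd (hirr j) hdvd)

namespace HyperinvariantSubspace

variable {F V : Type*} [Field F] [AddCommGroup V] [Module F V] {A : Module.End F V}

theorem ker_aeval (A : Module.End F V) (q : F[X]) :
    HyperinvariantSubspace A (LinearMap.ker (aeval A q)) := by
  intro B hB x hx
  rw [LinearMap.mem_ker] at hx ⊢
  rw [← Module.End.mul_apply, ← (commute_aeval_of_commute A hB q).eq, Module.End.mul_apply, hx,
    map_zero]

theorem iSup {ι : Sort*} {Y : ι → Submodule F V} (h : ∀ i, HyperinvariantSubspace A (Y i)) :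
    HyperinvariantSubspace A (⨆ i, Y i) := by
  intro B hB x hx
  have hle : (⨆ i, Y i) ≤ (⨆ i, Y i).comap B :=
    iSup_le fun i y hy => Submodule.mem_iSup_of_mem i (h i B hB y hy)
  exact hle hx

theorem le_iSup_inf {ι : Type*} [Fintype ι] {W : ι → Submodule F V} (π : ι → Module.End F V)
    (hπA : ∀ i, Commute (π i) A) (hπW : ∀ i x, π i x ∈ W i) (hsum : ∑ i, π i = 1)
    {Y : Submodule F V} (hY : HyperinvariantSubspace A Y) : Y ≤ ⨆ i, Y ⊓ W i := by
  intro y hy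
  have hy_eq : y = ∑ i, π i y := by rw [← LinearMap.sum_apply, hsum, Module.End.one_apply]
  rw [hy_eq]
  exact Submodule.sum_mem _ fun i _ => Submodule.mem_iSup_of_mem i ⟨hY _ (hπA i) y hy, hπW i y⟩

theorem comap_subtype {W : Submodule F V} (hAW : ∀ x ∈ W, A x ∈ W) (π : Module.End F V)
    (hπA : Commute π A) (hπW : ∀ x, π x ∈ W) (hπ : ∀ x ∈ W, π x = x) {Y : Submodule F V}
    (hY : HyperinvariantSubspace A Y) :
    HyperinvariantSubspace (A.restrict hAW) (Y.comap W.subtype) := by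
  intro B hB x hx
  set πW := π.codRestrict W hπW
  have hBA : Commute (W.subtype ∘ₗ B ∘ₗ πW) A := LinearMap.ext fun y => by
    change (B (πW (A y)) : V) = A (B (πW y))
    rw [show πW (A y) = A.restrict hAW (πW y) from Subtype.ext (LinearMap.congr_fun hπA y),
      ← Module.End.mul_apply, hB.eq, Module.End.mul_apply, LinearMap.coe_restrict_apply]
  have hπx : πW x = x := Subtype.ext (hπ x x.2)
  simpa only [Submodule.mem_comap, LinearMap.comp_apply, hπx] using hY _ hBA x hx

theorem inf_of_comap_subtype {W : Submodule F V} (hW : HyperinvariantSubspace A W)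
    (hAW : ∀ x ∈ W, A x ∈ W) {Y : Submodule F V}
    (hY : HyperinvariantSubspace (A.restrict hAW) (Y.comap W.subtype)) :
    HyperinvariantSubspace A (Y ⊓ W) := by
  rintro B hB x ⟨hxY, hxW⟩
  have hBW : ∀ y ∈ W, B y ∈ W := hW B hB
  exact ⟨hY (B.restrict hBW) (LinearMap.restrict_commute hB hBW hAW) ⟨x, hxW⟩ hxY, hBW x hxW⟩

end HyperinvariantSubspace

theorem hyperinvariant_iff_primary_decomposition_general
    {F V : Type*} [Field F] [AddCommGroup V] [Module F V]
    (A : Module.End F V) {n : ℕ} (p : Fin n → Polynomial F) (k : Fin n → ℕ)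
    (hirr : ∀ i, Irreducible (p i)) (hmonic : ∀ i, (p i).Monic)
    (hdist : Function.Injective p)
    (hmin : minpoly F A = ∏ i, p i ^ k i)
    (Y : Submodule F V) :
    HyperinvariantSubspace A Y ↔
      (Y = ⨆ i, Y ⊓ LinearMap.ker (Polynomial.aeval A (p i) ^ k i)) ∧
      iSupIndep (fun i => Y ⊓ LinearMap.ker (Polynomial.aeval A (p i) ^ k i)) ∧
      ∀ i, HyperinvariantSubspace
        (A.restrict (aeval_pow_ker_invariant A (p i) (k i)))
        (Y.comap (LinearMap.ker (Polynomial.aeval A (p i) ^ k i)).subtype) := by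
  have hker : ∀ i, LinearMap.ker (aeval A (p i) ^ k i) = LinearMap.ker (aeval A (p i ^ k i)) :=
    fun i => by rw [map_pow]
  have hcop := pairwise_isCoprime_pow_of_injective hirr hmonic hdist k
  obtain ⟨e, hsum, hrange, hfix⟩ :=
    exists_aeval_projections A hcop (by rw [← hmin, minpoly.aeval])
  simp only [← hker] at hrange hfix
  have heA : ∀ i, Commute (aeval A (e i)) A := fun i => (commute_aeval_of_commute A rfl (e i)).symm
  constructor
  · intro hY
    refine ⟨le_antisymm (hY.le_iSup_inf _ heA hrange hsum) (iSup_le fun i => inf_le_left),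
      ?_, fun i => hY.comap_subtype _ _ (heA i) (hrange i) (hfix i)⟩
    exact (iSupIndep_ker_aeval_of_pairwise_isCoprime A hcop).mono
      fun i => inf_le_right.trans (hker i).le
  · rintro ⟨hY, -, hYi⟩
    rw [hY]
    exact HyperinvariantSubspace.iSup fun i =>
      .inf_of_comap_subtype (hker i ▸ .ker_aeval A _) _ (hYi i)

/-- With the primary decomposition `Vᵢ = ker (pᵢ(A) ^ kᵢ)` and restrictions
`Aᵢ = A | Vᵢ`, a subspace `Y` is hyperinvariant for `A` iff `Y` is the internal direct sum
of the `Y ⊓ Vᵢ` and each `Y ⊓ Vᵢ`, viewed inside `Vᵢ`, is hyperinvariant for `Aᵢ`. -/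
theorem hyperinvariant_iff_primary_decomposition
    {F V : Type*} [Field F] [AddCommGroup V] [Module F V] [FiniteDimensional F V]
    (A : Module.End F V) {n : ℕ} (p : Fin n → Polynomial F) (k : Fin n → ℕ)
    (hirr : ∀ i, Irreducible (p i)) (hmonic : ∀ i, (p i).Monic) (hk : ∀ i, 0 < k i)
    (hdist : Function.Injective p)
    (hmin : minpoly F A = ∏ i, p i ^ k i)
    (Y : Submodule F V) :
    HyperinvariantSubspace A Y ↔
      (Y = ⨆ i, Y ⊓ LinearMap.ker (Polynomial.aeval A (p i) ^ k i)) ∧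
      iSupIndep (fun i => Y ⊓ LinearMap.ker (Polynomial.aeval A (p i) ^ k i)) ∧
      ∀ i, HyperinvariantSubspace
        (A.restrict (aeval_pow_ker_invariant A (p i) (k i)))
        (Y.comap (LinearMap.ker (Polynomial.aeval A (p i) ^ k i)).subtype) :=
  hyperinvariant_iff_primary_decomposition_general A p k hirr hmonic hdist hmin Y
end

section
/- Let A be a linear endomorphism of a finite-dimensional vector space V over a field F whose minimal polynomial factors as m_A = p₁^{k₁} ⋯ p_r^{k_r} with p₁, …, p_r pairwise distinct irreducible polynomials, and set V_i = ker(p_i(A)^{k_i}), with restriction A_i = A|V_i. Then a subspace Y of V is characteristic for A if and only if Y = (Y ∩ V₁) ⊕ ⋯ ⊕ (Y ∩ V_r) and, for each i, the subspace Y ∩ V_i of V_i is characteristic for A_i. -/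
open Polynomial

section aux
variable {F V : Type*} [Field F] [AddCommGroup V] [Module F V]

lemma commute_aeval_aux {B A : Module.End F V} (h : Commute B A) (q : Polynomial F) :
    Commute B (Polynomial.aeval A q) := by
  induction q using Polynomial.induction_on' with
  | add r s hr hs => rw [map_add]; exact hr.add_right hs
  | monomial m a =>
      rw [Polynomial.aeval_monomial]
      exact (Algebra.commute_algebraMap_right a B).mul_right (h.pow_right m)

lemma mem_aeval_aux (A : Module.End F V) (Y : Submodule F V) (hY : ∀ x ∈ Y, A x ∈ Y)
    (q : Polynomial F) : ∀ y ∈ Y, Polynomial.aeval A q y ∈ Y := by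
  intro y hy
  induction q using Polynomial.induction_on' with
  | add r s hr hs => rw [map_add]; exact Y.add_mem hr hs
  | monomial m a =>
      rw [Polynomial.aeval_monomial]
      have hp : (A ^ m) y ∈ Y := by
        induction m with
        | zero => simpa using hy
        | succ m ih => rw [pow_succ']; exact hY _ ih
      simpa [Module.End.mul_apply, Module.algebraMap_end_apply] using Y.smul_mem a hp

end aux


/-- A subspace `Y` is characteristic for `A` if it is `A`-invariant and `B Y ⊆ Y` for every
invertible endomorphism `B` commuting with `A`. -/
def CharacteristicSubspace {F V : Type*} [Field F] [AddCommGroup V] [Module F V]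
    (A : Module.End F V) (Y : Submodule F V) : Prop :=
  (∀ x ∈ Y, A x ∈ Y) ∧
    ∀ B : Module.End F V, IsUnit B → Commute B A → ∀ x ∈ Y, B x ∈ Y

/-- With the primary decomposition `Vᵢ = ker (pᵢ(A) ^ kᵢ)` and restrictions
`Aᵢ = A | Vᵢ`, a subspace `Y` is characteristic for `A` iff `Y` is the internal direct sum
of the `Y ⊓ Vᵢ` and each `Y ⊓ Vᵢ`, viewed inside `Vᵢ`, is characteristic for `Aᵢ`. -/
theorem characteristic_iff_primary_decomposition
    {F V : Type*} [Field F] [AddCommGroup V] [Module F V] [FiniteDimensional F V]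
    (A : Module.End F V) {n : ℕ} (p : Fin n → Polynomial F) (k : Fin n → ℕ)
    (hirr : ∀ i, Irreducible (p i)) (hmonic : ∀ i, (p i).Monic) (hk : ∀ i, 0 < k i)
    (hdist : Function.Injective p)
    (hmin : minpoly F A = ∏ i, p i ^ k i)
    (Y : Submodule F V) :
    CharacteristicSubspace A Y ↔
      (Y = ⨆ i, Y ⊓ LinearMap.ker (Polynomial.aeval A (p i) ^ k i)) ∧
      iSupIndep (fun i => Y ⊓ LinearMap.ker (Polynomial.aeval A (p i) ^ k i)) ∧
      ∀ i, CharacteristicSubspace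
        (A.restrict (aeval_pow_ker_invariant A (p i) (k i)))
        (Y.comap (LinearMap.ker (Polynomial.aeval A (p i) ^ k i)).subtype) := by
  classical
  set K : Fin n → Submodule F V :=
    fun i => LinearMap.ker (Polynomial.aeval A (p i) ^ k i) with hKdef
  -- coprimality
  have hcp : ∀ i j, i ≠ j → IsCoprime (p i ^ k i) (p j ^ k j) := by
    intro i j hij
    refine IsCoprime.pow ?_
    rw [(hirr i).coprime_iff_not_dvd]
    intro hdvd
    exact hij (hdist (Polynomial.eq_of_monic_of_associated (hmonic i) (hmonic j)
      ((hirr i).associated_of_dvd (hirr j) hdvd)))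
  have hq : ∀ i, IsCoprime (p i ^ k i) (∏ j ∈ Finset.univ.erase i, p j ^ k j) :=
    fun i => IsCoprime.prod_right fun j hj => hcp i j (Finset.ne_of_mem_erase hj).symm
  choose c d hcd using hq
  set e : Fin n → Polynomial F :=
    fun i => d i * ∏ j ∈ Finset.univ.erase i, p j ^ k j with hedef
  have he1 : ∀ i, p i ^ k i ∣ e i - 1 := by
    intro i
    exact ⟨-(c i), by linear_combination hcd i⟩
  have he2 : ∀ i j, j ≠ i → p j ^ k j ∣ e i := by
    intro i j hj
    exact Dvd.dvd.mul_left
      (Finset.dvd_prod_of_mem _ (Finset.mem_erase.2 ⟨hj, Finset.mem_univ j⟩)) (d i)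
  have he3 : ∀ i, (∏ j, p j ^ k j) ∣ p i ^ k i * e i := by
    intro i
    rw [← Finset.mul_prod_erase Finset.univ _ (Finset.mem_univ i)]
    exact mul_dvd_mul_left _ (dvd_mul_left _ _)
  have hm0 : Polynomial.aeval A (∏ j, p j ^ k j) = 0 := by
    rw [← hmin]; exact minpoly.aeval F A
  have hannih : ∀ t : Polynomial F, (∏ j, p j ^ k j) ∣ t → Polynomial.aeval A t = 0 := by
    rintro t ⟨u, rfl⟩
    rw [map_mul, hm0, zero_mul]
  set π : Fin n → Module.End F V := fun i => Polynomial.aeval A (e i) with hπdef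
  have hP1 : ∀ i x, π i x ∈ K i := by
    intro i x
    rw [hKdef, LinearMap.mem_ker, ← Module.End.mul_apply, ← map_pow, ← map_mul,
      hannih _ (he3 i)]
    rfl
  have hP3 : ∀ i, ∀ x ∈ K i, π i x = x := by
    intro i x hx
    obtain ⟨t, ht⟩ := he1 i
    have h0 : Polynomial.aeval A (e i - 1) x = 0 := by
      rw [ht, mul_comm, map_mul, Module.End.mul_apply, map_pow]
      rw [hKdef, LinearMap.mem_ker] at hx
      rw [hx, map_zero]
    rw [map_sub, map_one, LinearMap.sub_apply, Module.End.one_apply, sub_eq_zero] at h0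
    exact h0
  have hP2 : ∀ i j, j ≠ i → ∀ x ∈ K j, π i x = 0 := by
    intro i j hj x hx
    obtain ⟨t, ht⟩ := he2 i j hj
    have hπi : π i = Polynomial.aeval A (e i) := rfl
    rw [hπi, ht, mul_comm, map_mul, Module.End.mul_apply, map_pow]
    rw [hKdef, LinearMap.mem_ker] at hx
    rw [hx, map_zero]
  have hP4 : ∀ x, ∑ i, π i x = x := by
    intro x
    have hs : ∀ j, p j ^ k j ∣ (∑ i, e i) - 1 := by
      intro j
      have hsplit : (∑ i, e i) - 1 = (e j - 1) + ∑ i ∈ Finset.univ.erase j, e i := by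
        rw [← Finset.add_sum_erase Finset.univ e (Finset.mem_univ j)]; ring
      rw [hsplit]
      exact dvd_add (he1 j)
        (Finset.dvd_sum fun i hi => he2 i j (Finset.ne_of_mem_erase hi).symm)
    have hdvd : (∏ i, p i ^ k i) ∣ (∑ i, e i) - 1 :=
      Finset.prod_dvd_of_coprime (fun i _ j hj hij => hcp i j hij) fun j _ => hs j
    have h0 : Polynomial.aeval A ((∑ i, e i) - 1) x = 0 := by
      rw [hannih _ hdvd]; rfl
    rw [map_sub, map_one, map_sum, LinearMap.sub_apply, LinearMap.sum_apply,
      Module.End.one_apply, sub_eq_zero] at h0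
    exact h0
  have hidem : ∀ i x, π i (π i x) = π i x := fun i x => hP3 i _ (hP1 i x)
  have hAπ : ∀ i x, π i (A x) = A (π i x) := by
    intro i x
    have hc : Commute A (π i) := commute_aeval_aux (Commute.refl A) (e i)
    calc π i (A x) = (π i * A) x := rfl
      _ = (A * π i) x := by rw [← hc]
      _ = A (π i x) := rfl
  have hKstable : ∀ (C : Module.End F V), Commute C A → ∀ i, ∀ x ∈ K i, C x ∈ K i := by
    intro C hC i x hx
    have hc := (commute_aeval_aux hC (p i)).pow_right (k i)
    rw [hKdef, LinearMap.mem_ker] at hx ⊢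
    calc (Polynomial.aeval A (p i) ^ k i) (C x)
        = ((Polynomial.aeval A (p i) ^ k i) * C) x := rfl
      _ = (C * (Polynomial.aeval A (p i) ^ k i)) x := by rw [← hc]
      _ = C ((Polynomial.aeval A (p i) ^ k i) x) := rfl
      _ = 0 := by rw [hx, map_zero]
  constructor
  · rintro ⟨hYA, hYB⟩
    have hYπ : ∀ i, ∀ y ∈ Y, π i y ∈ Y := fun i y hy => mem_aeval_aux A Y hYA (e i) y hy
    refine ⟨?_, ?_, ?_⟩
    · refine le_antisymm ?_ (iSup_le fun i => inf_le_left)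
      intro y hy
      have hrw : y = ∑ i, π i y := (hP4 y).symm
      rw [hrw]
      exact Submodule.sum_mem _ fun i _ =>
        Submodule.mem_iSup_of_mem i ⟨hYπ i y hy, hP1 i y⟩
    · have hind : iSupIndep K := by
        intro i
        rw [Submodule.disjoint_def]
        intro x hxi hxs
        have hsup : (⨆ j, ⨆ _ : j ≠ i, K j) ≤ LinearMap.ker (π i) := by
          refine iSup_le fun j => iSup_le fun hj => ?_
          intro z hz
          exact LinearMap.mem_ker.2 (hP2 i j hj z hz)
        have h0 : π i x = 0 := hsup hxs
        rw [hP3 i x hxi] at h0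
        exact h0
      exact hind.mono fun i => inf_le_right
    · intro i
      constructor
      · intro y' hy'
        rw [Submodule.mem_comap] at hy' ⊢
        simp only [Submodule.subtype_apply, LinearMap.restrict_coe_apply] at hy' ⊢
        exact hYA _ hy'
      · intro B hBu hBc y' hy'
        set Ai : Module.End F (LinearMap.ker (Polynomial.aeval A (p i) ^ k i)) :=
          A.restrict (aeval_pow_ker_invariant A (p i) (k i)) with hAidef
        rw [Submodule.mem_comap] at hy' ⊢
        set ι : K i →ₗ[F] V := (K i).subtype with hιdef
        set π' : V →ₗ[F] K i := LinearMap.codRestrict (K i) (π i) (hP1 i) with hπ'def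
        have hπ'coe : ∀ x, (π' x : V) = π i x := fun x => rfl
        have hπι : ∀ v : K i, π i (ι v) = ι v := fun v => hP3 i v v.2
        have hπ'ι : ∀ v : K i, π' (ι v) = v := fun v => Subtype.ext (by
          rw [hπ'coe]; exact hπι v)
        have hππ : ∀ x, π' (π i x) = π' x := fun x => Subtype.ext (by
          rw [hπ'coe, hπ'coe]; exact hidem i x)
        obtain ⟨u, hu⟩ := hBu
        set C : Module.End F (K i) := ↑u⁻¹ with hCdef
        have hBCv : ∀ v, B (C v) = v := by
          intro v
          have : B * C = 1 := by rw [← hu, hCdef]; exact u.mul_inv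
          calc B (C v) = (B * C) v := rfl
            _ = v := by rw [this]; rfl
        have hCBv : ∀ v, C (B v) = v := by
          intro v
          have : C * B = 1 := by rw [← hu, hCdef]; exact u.inv_mul
          calc C (B v) = (C * B) v := rfl
            _ = v := by rw [this]; rfl
        set L : Module.End F V := ι ∘ₗ (B ∘ₗ π') + (1 - π i) with hLdef
        set L' : Module.End F V := ι ∘ₗ (C ∘ₗ π') + (1 - π i) with hL'def
        have hLapp : ∀ x, L x = ι (B (π' x)) + (x - π i x) := by
          intro x; simp [hLdef, LinearMap.add_apply, LinearMap.sub_apply]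
        have hL'app : ∀ x, L' x = ι (C (π' x)) + (x - π i x) := by
          intro x; simp [hL'def, LinearMap.add_apply, LinearMap.sub_apply]
        have hπ'L' : ∀ x, π' (L' x) = C (π' x) := by
          intro x
          rw [hL'app, map_add, map_sub, hπ'ι, hππ]
          abel
        have hπL' : ∀ x, π i (L' x) = ι (C (π' x)) := by
          intro x
          rw [hL'app, map_add, map_sub, hπι, hidem]
          abel
        have hπ'L : ∀ x, π' (L x) = B (π' x) := by
          intro x
          rw [hLapp, map_add, map_sub, hπ'ι, hππ]
          abel
        have hπL : ∀ x, π i (L x) = ι (B (π' x)) := by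
          intro x
          rw [hLapp, map_add, map_sub, hπι, hidem]
          abel
        have key1 : ∀ x, L (L' x) = x := by
          intro x
          rw [hLapp, hπ'L', hπL', hBCv, hL'app]
          have : (ι (π' x) : V) = π i x := hπ'coe x
          rw [this]
          abel
        have key2 : ∀ x, L' (L x) = x := by
          intro x
          rw [hL'app, hπ'L, hπL, hCBv, hLapp]
          have : (ι (π' x) : V) = π i x := hπ'coe x
          rw [this]
          abel
        have hLu : IsUnit L := by
          refine isUnit_iff_exists.2 ⟨L', ?_, ?_⟩
          · exact LinearMap.ext fun x => key1 x
          · exact LinearMap.ext fun x => key2 x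
        have hπ'A : ∀ x, π' (A x) = Ai (π' x) := by
          intro x
          apply Subtype.ext
          rw [hπ'coe, hAidef, LinearMap.restrict_coe_apply, hπ'coe, hAπ]
        have hBc' : ∀ v, B (Ai v) = Ai (B v) := by
          intro v
          calc B (Ai v) = (B * Ai) v := rfl
            _ = (Ai * B) v := by rw [hBc]
            _ = Ai (B v) := rfl
        have hιA : ∀ v : K i, (ι (Ai v) : V) = A (ι v) := by
          intro v
          simp only [hιdef, Submodule.subtype_apply, hAidef, LinearMap.restrict_coe_apply]
        have hLc : Commute L A := by
          apply LinearMap.ext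
          intro x
          have lhs : (L * A) x = L (A x) := rfl
          have rhs : (A * L) x = A (L x) := rfl
          rw [lhs, rhs, hLapp, hLapp, hπ'A, hBc', hιA, hAπ, map_add, map_sub]
        have hmem := hYB L hLu hLc (ι y') hy'
        have hLy : L (ι y') = ι (B y') := by
          rw [hLapp, hπ'ι, hπι]
          abel
        rw [hLy] at hmem
        exact hmem
  · rintro ⟨hsup, hind, hpieces⟩
    constructor
    · intro y hy
      have hle : (⨆ i, Y ⊓ K i) ≤ Y.comap A := by
        refine iSup_le fun i => ?_
        rintro x ⟨hxY, hxK⟩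
        have h1 : (⟨x, hxK⟩ : K i) ∈ Y.comap (K i).subtype := hxY
        have h2 := (hpieces i).1 _ h1
        rw [Submodule.mem_comap] at h2 ⊢
        simpa only [Submodule.subtype_apply, LinearMap.restrict_coe_apply] using h2
      exact hle (hsup ▸ hy)
    · intro B hBu hBc y hy
      obtain ⟨u, hu⟩ := hBu
      have hB'c : Commute (↑u⁻¹ : Module.End F V) A := by
        have h1 : Commute (↑u : Module.End F V) A := by rw [hu]; exact hBc
        exact h1.units_inv_left
      have hle : (⨆ i, Y ⊓ K i) ≤ Y.comap B := by
        refine iSup_le fun i => ?_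
        rintro x ⟨hxY, hxK⟩
        set Ai := A.restrict (aeval_pow_ker_invariant A (p i) (k i)) with hAidef
        set Bi : Module.End F (K i) := B.restrict (hKstable B hBc i) with hBidef
        set B'i : Module.End F (K i) :=
          (↑u⁻¹ : Module.End F V).restrict (hKstable _ hB'c i) with hB'idef
        have hBB' : B * ↑u⁻¹ = 1 := by rw [← hu]; exact u.mul_inv
        have hB'B : (↑u⁻¹ : Module.End F V) * B = 1 := by rw [← hu]; exact u.inv_mul
        have hBiu : IsUnit Bi := by
          refine isUnit_iff_exists.2 ⟨B'i, ?_, ?_⟩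
          · apply LinearMap.ext
            intro v
            apply Subtype.ext
            calc ((Bi * B'i) v : V) = B ((↑u⁻¹ : Module.End F V) (v : V)) := by
                  rw [Module.End.mul_apply, hBidef, LinearMap.restrict_coe_apply,
                    hB'idef, LinearMap.restrict_coe_apply]
              _ = (B * (↑u⁻¹ : Module.End F V)) (v : V) := rfl
              _ = (v : V) := by rw [hBB']; rfl
          · apply LinearMap.ext
            intro v
            apply Subtype.ext
            calc ((B'i * Bi) v : V) = (↑u⁻¹ : Module.End F V) (B (v : V)) := by
                  rw [Module.End.mul_apply, hB'idef, LinearMap.restrict_coe_apply,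
                    hBidef, LinearMap.restrict_coe_apply]
              _ = ((↑u⁻¹ : Module.End F V) * B) (v : V) := rfl
              _ = (v : V) := by rw [hB'B]; rfl
        have hBic : Commute Bi Ai := by
          apply LinearMap.ext
          intro v
          apply Subtype.ext
          calc ((Bi * Ai) v : V) = B (A (v : V)) := by
                rw [Module.End.mul_apply, hBidef, LinearMap.restrict_coe_apply,
                  hAidef, LinearMap.restrict_coe_apply]
            _ = (B * A) (v : V) := rfl
            _ = (A * B) (v : V) := by rw [hBc]
            _ = A (B (v : V)) := rfl
            _ = ((Ai * Bi) v : V) := by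
                rw [Module.End.mul_apply, hAidef, LinearMap.restrict_coe_apply,
                  hBidef, LinearMap.restrict_coe_apply]
        have h1 : (⟨x, hxK⟩ : K i) ∈ Y.comap (K i).subtype := hxY
        have h2 := (hpieces i).2 Bi hBiu hBic _ h1
        rw [Submodule.mem_comap] at h2 ⊢
        simpa only [Submodule.subtype_apply, hBidef, LinearMap.restrict_coe_apply] using h2
      exact hle (hsup ▸ hy)
end

section
/- Let A be a linear endomorphism of a finite-dimensional vector space V over a field F whose minimal polynomial is p^r for an irreducible separable polynomial p. Then there exist endomorphisms S and N of V such that A = S + N, S is semisimple, N is nilpotent, S N = N S, and both S and N are polynomials in A (i.e., lie in the subalgebra F[A] of End(V) generated by A). -/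
/-- An endomorphism `S` is semisimple if every `S`-invariant subspace admits an
`S`-invariant complement. -/
def IsSemisimpleEnd {F V : Type*} [Field F] [AddCommGroup V] [Module F V]
    (S : Module.End F V) : Prop :=
  ∀ W : Submodule F V, (∀ x ∈ W, S x ∈ W) →
    ∃ W' : Submodule F V, (∀ x ∈ W', S x ∈ W') ∧ IsCompl W W'

/-- Jordan–Chevalley decomposition, existence: If the minimal polynomial of
`A` is `p ^ r` with `p` irreducible and separable, then `A = S + N` with `S` semisimple,
`N` nilpotent, `S N = N S`, and `S`, `N` polynomials in `A`. -/
theorem jordan_chevalley_exists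
    {F V : Type*} [Field F] [AddCommGroup V] [Module F V] [FiniteDimensional F V]
    (A : Module.End F V) (p : Polynomial F) (r : ℕ) (hr : 0 < r)
    (hirr : Irreducible p) (hsep : p.Separable)
    (hmin : minpoly F A = p ^ r) :
    ∃ S N : Module.End F V, A = S + N ∧ IsSemisimpleEnd S ∧ IsNilpotent N ∧
      S * N = N * S ∧ S ∈ Algebra.adjoin F {A} ∧ N ∈ Algebra.adjoin F {A} := by
  have nil : minpoly F A ∣ p ^ r := hmin ▸ dvd_rfl
  obtain ⟨n, hn, s, hs, hniln, hss, hA⟩ :=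
    Module.End.exists_isNilpotent_isSemisimple_of_separable_of_dvd_pow hsep nil
  refine ⟨s, n, by rw [hA, add_comm], ?_, hniln, ?_, hs, hn⟩
  · intro W hW
    obtain ⟨W', hW', hc⟩ := (Module.End.isSemisimple_iff.mp hss) W
      ((Module.End.mem_invtSubmodule s).mpr (fun x hx => hW x hx))
    exact ⟨W', (Module.End.mem_invtSubmodule s).mp hW', hc⟩
  · have h1 : Commute A s := Algebra.commute_of_mem_adjoin_self hs
    exact Algebra.commute_of_mem_adjoin_singleton_of_commute hn h1.symm
end

section
/- Let A be a linear endomorphism of a finite-dimensional vector space V over a field F whose minimal polynomial is p^r for an irreducible separable polynomial p. If A = S + N = S' + N' are two decompositions with S, S' semisimple, N, N' nilpotent, S N = N S, and S' N' = N' S', then S = S' and N = N'. -/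
open Polynomial

theorem isSemisimpleEnd_iff_isSemisimple {F V : Type*} [Field F] [AddCommGroup V] [Module F V]
    (S : Module.End F V) : IsSemisimpleEnd S ↔ S.IsSemisimple := by
  simp only [IsSemisimpleEnd, Module.End.isSemisimple_iff, Module.End.mem_invtSubmodule]
  rfl

namespace Commute

open scoped IsMulCommutative

variable {R A : Type*} [CommRing R] [Ring A] [Algebra R A] {P : R[X]} {a b : A}

theorem isMulCommutative_adjoin_pair (h : Commute a b) :
    IsMulCommutative (Algebra.adjoin R {a, b}) :=
  Algebra.isMulCommutative_adjoin R <| by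
    rintro x (rfl | rfl) y (rfl | rfl)
    exacts [rfl, h.eq, h.eq.symm, rfl]

theorem isNilpotent_aeval_of_isNilpotent_sub (h : Commute a b) (hab : IsNilpotent (a - b))
    (ha : IsNilpotent (aeval a P)) : IsNilpotent (aeval b P) := by
  have := h.isMulCommutative_adjoin_pair (R := R)
  let a' : Algebra.adjoin R {a, b} := ⟨a, Algebra.subset_adjoin (by simp)⟩
  let b' : Algebra.adjoin R {a, b} := ⟨b, Algebra.subset_adjoin (by simp)⟩
  have hval : Function.Injective (Algebra.adjoin R {a, b}).val := Subtype.val_injective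
  have hab' : IsNilpotent (a' - b') := (IsNilpotent.map_iff hval).mp hab
  have ha' : IsNilpotent (aeval a' P) := (IsNilpotent.map_iff hval).mp (by simpa [a'] using ha)
  suffices IsNilpotent (aeval b' P) by simpa [b'] using this.map (Algebra.adjoin R {a, b}).val
  rw [← sub_sub_cancel (aeval a' P) (aeval b' P)]
  exact (Commute.all _ _).isNilpotent_sub ha' (isNilpotent_aeval_sub_of_isNilpotent_sub P hab')

theorem eq_of_aeval_eq_zero_of_isNilpotent_sub (hP : P.Separable) (h : Commute a b)
    (ha : aeval a P = 0) (hb : aeval b P = 0) (hab : IsNilpotent (a - b)) : a = b := by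
  have := h.isMulCommutative_adjoin_pair (R := R)
  let a' : Algebra.adjoin R {a, b} := ⟨a, Algebra.subset_adjoin (by simp)⟩
  let b' : Algebra.adjoin R {a, b} := ⟨b, Algebra.subset_adjoin (by simp)⟩
  have hval : Function.Injective (Algebra.adjoin R {a, b}).val := Subtype.val_injective
  have hab' : IsNilpotent (a' - b') := (IsNilpotent.map_iff hval).mp hab
  have ha' : aeval a' P = 0 := hval (by simpa [a'] using ha)
  have hb' : aeval b' P = 0 := hval (by simpa [b'] using hb)
  have hunit : IsUnit (aeval a' (derivative P)) := by
    obtain ⟨u, v, huv⟩ := hP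
    refine .of_mul_eq_one_right (aeval a' v) ?_
    simpa [ha'] using congr_arg (aeval a') huv
  obtain ⟨_, -, hr⟩ := existsUnique_nilpotent_sub_and_aeval_eq_zero (ha' ▸ .zero) hunit
  exact congr_arg Subtype.val <| (hr a' ⟨by simp, ha'⟩).trans (hr b' ⟨hab', hb'⟩).symm

end Commute

namespace Module.End

variable {K M : Type*} [Field K] [AddCommGroup M] [Module K M] [FiniteDimensional K M]
  {P : K[X]} {f s t : End K M}

theorem IsSemisimple.aeval_eq_zero_of_isNilpotent_sub (hs : s.IsSemisimple) (hfs : Commute f s)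
    (hns : IsNilpotent (f - s)) (hf : IsNilpotent (aeval f P)) : aeval s P = 0 :=
  eq_zero_of_isNilpotent_isSemisimple (hfs.isNilpotent_aeval_of_isNilpotent_sub hns hf)
    (hs.aeval P)

theorem IsSemisimple.eq_of_isNilpotent_sub (hP : P.Separable) (hf : IsNilpotent (aeval f P))
    (hs : s.IsSemisimple) (ht : t.IsSemisimple) (hfs : Commute f s) (hft : Commute f t)
    (hst : Commute s t) (hns : IsNilpotent (f - s)) (hnt : IsNilpotent (f - t)) : s = t := by
  refine hst.eq_of_aeval_eq_zero_of_isNilpotent_sub hP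
    (hs.aeval_eq_zero_of_isNilpotent_sub hfs hns hf)
    (ht.aeval_eq_zero_of_isNilpotent_sub hft hnt hf) ?_
  rw [← sub_sub_sub_cancel_left t s f]
  have hcomm : Commute (f - t) (f - s) :=
    ((Commute.refl f).sub_right hfs).sub_left (hft.symm.sub_right hst.symm)
  exact hcomm.isNilpotent_sub hnt hns

end Module.End

theorem jordan_chevalley_unique_general
    {F V : Type*} [Field F] [AddCommGroup V] [Module F V] [FiniteDimensional F V]
    (A : Module.End F V) (p : Polynomial F) (r : ℕ)
    (hsep : p.Separable)
    (hmin : minpoly F A = p ^ r)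
    (S N S' N' : Module.End F V)
    (hA : A = S + N) (hA' : A = S' + N')
    (hS : IsSemisimpleEnd S) (hS' : IsSemisimpleEnd S')
    (hN : IsNilpotent N) (hN' : IsNilpotent N')
    (hc : S * N = N * S) (hc' : S' * N' = N' * S') :
    S = S' ∧ N = N' := by
  have hAp : IsNilpotent (aeval A p) := ⟨r, by rw [← map_pow, ← hmin, minpoly.aeval]⟩
  obtain ⟨n₀, -, s₀, hs₀, hn₀, hs₀_ss, hA₀⟩ :=
    Module.End.exists_isNilpotent_isSemisimple_of_separable_of_dvd_pow hsep hmin.dvd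
  have key : ∀ s n : Module.End F V, IsSemisimpleEnd s → IsNilpotent n → s * n = n * s →
      A = s + n → s = s₀ := by
    intro s n hs hn hsn hA
    have hAs : Commute A s := hA ▸ (Commute.refl s).add_left (Commute.symm hsn)
    refine ((isSemisimpleEnd_iff_isSemisimple s).mp hs).eq_of_isNilpotent_sub hsep hAp hs₀_ss hAs
      (Algebra.commute_of_mem_adjoin_self hs₀)
      (Algebra.commute_of_mem_adjoin_singleton_of_commute hs₀ hAs.symm) ?_ ?_
    · rwa [hA, add_sub_cancel_left]
    · rwa [hA₀, add_sub_cancel_right]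
  have hSS' : S = S' := (key S N hS hN hc hA).trans (key S' N' hS' hN' hc' hA').symm
  exact ⟨hSS', add_left_cancel (hSS' ▸ hA.symm.trans hA')⟩

/-- Jordan–Chevalley decomposition, uniqueness: If the minimal polynomial of
`A` is `p ^ r` with `p` irreducible and separable, and `A = S + N = S' + N'` with `S, S'`
semisimple, `N, N'` nilpotent, `S N = N S` and `S' N' = N' S'`, then `S = S'` and
`N = N'`. -/
theorem jordan_chevalley_unique
    {F V : Type*} [Field F] [AddCommGroup V] [Module F V] [FiniteDimensional F V]
    (A : Module.End F V) (p : Polynomial F) (r : ℕ) (hr : 0 < r)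
    (hirr : Irreducible p) (hsep : p.Separable)
    (hmin : minpoly F A = p ^ r)
    (S N S' N' : Module.End F V)
    (hA : A = S + N) (hA' : A = S' + N')
    (hS : IsSemisimpleEnd S) (hS' : IsSemisimpleEnd S')
    (hN : IsNilpotent N) (hN' : IsNilpotent N')
    (hc : S * N = N * S) (hc' : S' * N' = N' * S') :
    S = S' ∧ N = N' :=
  jordan_chevalley_unique_general A p r hsep hmin S N S' N' hA hA' hS hS' hN hN' hc hc'
end

section
/- Let A and B be linear endomorphisms of finite-dimensional vector spaces V and W, respectively, over a field F, and suppose the minimal polynomials of A and B are coprime. If X : V → W is a linear map satisfying X ∘ A = B ∘ X, then X = 0. -/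
/-! Since `X` intertwines `A` and `B`, it intertwines `p(A)` and `p(B)` for every polynomial `p`.
Taking `p = minpoly B` gives `X ∘ p(A) = 0`, and `p(A)` is invertible because `p` is coprime
to `minpoly A`. -/

open Polynomial

theorem LinearMap.comp_aeval_eq_aeval_comp {R M N : Type*} [CommSemiring R]
    [AddCommMonoid M] [Module R M] [AddCommMonoid N] [Module R N]
    {f : Module.End R M} {g : Module.End R N} {X : M →ₗ[R] N} (hX : X ∘ₗ f = g ∘ₗ X)
    (p : R[X]) :
    X ∘ₗ aeval f p = aeval g p ∘ₗ X := by
  induction p using Polynomial.induction_on' with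
  | add p q hp hq => simp only [map_add, LinearMap.comp_add, LinearMap.add_comp, hp, hq]
  | monomial n r =>
    simp only [aeval_monomial, Module.algebraMap_end_eq_smul_id, Module.End.mul_eq_comp,
      LinearMap.comp_smul, LinearMap.smul_comp, LinearMap.id_comp,
      Module.End.commute_pow_left_of_commute hX.symm]

theorem minpoly.isUnit_aeval_of_isCoprime {R A : Type*} [CommRing R] [Ring A] [Algebra R A]
    {a : A} {p : R[X]} (h : IsCoprime (minpoly R a) p) :
    IsUnit (Polynomial.aeval a p) := by
  obtain ⟨u, v, huv⟩ := h
  have hinv : Polynomial.aeval a v * Polynomial.aeval a p = 1 := by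
    simpa only [map_add, map_mul, minpoly.aeval, mul_zero, zero_add, map_one]
      using congrArg (Polynomial.aeval a) huv
  refine ⟨⟨Polynomial.aeval a p, Polynomial.aeval a v, ?_, hinv⟩, rfl⟩
  rwa [← map_mul, mul_comm, map_mul]

theorem intertwiner_eq_zero_of_coprime_minpoly_general
    {F V W : Type*} [Field F]
    [AddCommGroup V] [Module F V]
    [AddCommGroup W] [Module F W]
    (A : Module.End F V) (B : Module.End F W)
    (hcop : IsCoprime (minpoly F A) (minpoly F B))
    (X : V →ₗ[F] W) (hX : X ∘ₗ A = B ∘ₗ X) :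
    X = 0 := by
  have hXB : X ∘ₗ aeval A (minpoly F B) = 0 := by
    rw [LinearMap.comp_aeval_eq_aeval_comp hX, minpoly.aeval, LinearMap.zero_comp]
  have hsurj : Function.Surjective (aeval A (minpoly F B)) :=
    (Module.End.isUnit_iff _ |>.mp (minpoly.isUnit_aeval_of_isCoprime hcop)).surjective
  ext v
  obtain ⟨w, rfl⟩ := hsurj v
  exact LinearMap.congr_fun hXB w

/-- If the minimal polynomials of `A` and `B` are coprime, then the only
linear map `X : V → W` with `X ∘ A = B ∘ X` is `X = 0`. -/
theorem intertwiner_eq_zero_of_coprime_minpoly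
    {F V W : Type*} [Field F]
    [AddCommGroup V] [Module F V] [FiniteDimensional F V]
    [AddCommGroup W] [Module F W] [FiniteDimensional F W]
    (A : Module.End F V) (B : Module.End F W)
    (hcop : IsCoprime (minpoly F A) (minpoly F B))
    (X : V →ₗ[F] W) (hX : X ∘ₗ A = B ∘ₗ X) :
    X = 0 :=
  intertwiner_eq_zero_of_coprime_minpoly_general A B hcop X hX
end
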